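/- The conditional estimator is unbiased: under the model, E[S_{1-p}(k|l)] = E[S_p(l)] · [C(k+l,l)·p^l·(1-p)^k·C(k+l+r-1,k+l)·ξ^{k+l}] / [C(l+r-1,l)·ξ_p^l·(1-ξ_p)^r·(1-ξ)^{-r}], i.e., E[Σ_s 1{n_s^p=l, n_s-n_s^p=k}] equals E[Σ_s 1{n_s^p=l}] times the conditional probability P(unsampled = k | sampled = l) given by the Bayes formula with negative binomial marginals. -/

import Mathlib

open MeasureTheory

/-- Generalized negative binomial coefficient C(n+r-1, n) = Γ(n+r)/(Γ(n+1)Γ(r)). -/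
noncomputable def nbCoef (r : ℝ) (n : ℕ) : ℝ :=
  Real.Gamma (n + r) / (Real.Gamma (n + 1) * Real.Gamma r)

/-!
Write `(m, k)` for the sampled and unsampled abundances of one species. Binomial thinning gives
`P(m, k) = C(m+k, m) p^m (1-p)^k P(N = m + k)`, and the identity
`C(m+k+r-1, m+k) C(m+k, m) = C(m+r-1, m) C(k+(r+m)-1, k)` turns `∑_k P(m, k)` into a negative
binomial series: for `m ≥ 1` the sampled abundance is negative binomial with parameter `ξ_p`, up to
the truncation constant. Both expected counts are `S` times a probability, so the theorem is Bayes'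
formula `P(l, k) = P(m = l) · P(k | l)`. No measurability of the events is assumed: the fibres of
`(m, k)` cover `Ω` and their outer measures add up to `1`, which forces each fibre to be
null-measurable.
-/

lemma Real.Gamma_nat_add_eq_ascPochhammer_mul {a : ℝ} (ha : 0 < a) (n : ℕ) :
    Real.Gamma (n + a) = (ascPochhammer ℝ n).eval a * Real.Gamma a := by
  induction n with
  | zero => simp
  | succ n ih =>
    rw [Nat.cast_succ, add_right_comm, Real.Gamma_add_one (by positivity), ih,
      ascPochhammer_succ_eval]
    ring

lemma nbCoef_eq_multichoose {a : ℝ} (ha : 0 < a) (n : ℕ) :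
    nbCoef a n = Ring.multichoose a n := by
  have hfact := Ring.factorial_nsmul_multichoose_eq_ascPochhammer a n
  rw [Polynomial.ascPochhammer_smeval_eq_eval, nsmul_eq_mul] at hfact
  have : (n.factorial : ℝ) ≠ 0 := by positivity
  rw [nbCoef, Real.Gamma_nat_add_eq_ascPochhammer_mul ha, Real.Gamma_nat_eq_factorial, ← hfact,
    mul_div_mul_right _ _ (Real.Gamma_pos_of_pos ha).ne', mul_div_cancel_left₀ _ this]

lemma hasSum_nbCoef_mul_pow {a x : ℝ} (ha : 0 < a) (hx : |x| < 1) :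
    HasSum (fun n ↦ nbCoef a n * x ^ n) ((1 - x) ^ (-a)) := by
  have hx' : x ∈ Metric.eball (0 : ℝ) 1 := by
    simpa [edist_dist, Real.dist_eq] using hx
  have := (Real.one_div_one_sub_rpow_hasFPowerSeriesOnBall_zero a).hasSum hx'
  simp only [FormalMultilinearSeries.ofScalars_apply_eq, zero_add, smul_eq_mul] at this
  rw [Real.rpow_neg (by linarith [abs_lt.1 hx]), ← one_div]
  simpa only [nbCoef_eq_multichoose ha, Ring.multichoose_eq] using this

lemma nbCoef_pos {a : ℝ} (ha : 0 < a) (n : ℕ) : 0 < nbCoef a n := by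
  unfold nbCoef
  have := Real.Gamma_pos_of_pos ha
  have := Real.Gamma_pos_of_pos (show 0 < (n : ℝ) + a by positivity)
  have := Real.Gamma_pos_of_pos (show 0 < (n : ℝ) + 1 by positivity)
  positivity

lemma nbCoef_zero {a : ℝ} (ha : 0 < a) : nbCoef a 0 = 1 := by
  simp [nbCoef, (Real.Gamma_pos_of_pos ha).ne']

lemma nbCoef_add_mul_choose {a : ℝ} (ha : 0 < a) (m k : ℕ) :
    nbCoef a (m + k) * (m + k).choose m = nbCoef a m * nbCoef (a + m) k := by
  have hΓa := (Real.Gamma_pos_of_pos ha).ne'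
  have hΓam := (Real.Gamma_pos_of_pos (show 0 < a + m by positivity)).ne'
  have hchoose : ((m + k).choose m : ℝ) = (m + k).factorial / (m.factorial * k.factorial) := by
    rw [Nat.cast_choose ℝ (Nat.le_add_right m k), Nat.add_sub_cancel_left]
  have hshift : ((m + k : ℕ) : ℝ) + a = k + (a + m) := by push_cast; ring
  simp only [nbCoef, hshift, hchoose, Real.Gamma_nat_eq_factorial]
  rw [add_comm (m : ℝ) a]
  field_simp

section Model

noncomputable def truncNegBinomial (r ξ : ℝ) (n : ℕ) : ℝ :=
  if 1 ≤ n then (1 - (1 - ξ) ^ r)⁻¹ * nbCoef r n * ξ ^ n * (1 - ξ) ^ r else 0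

/-- The probability of `m` sampled and `k` unsampled individuals. -/
noncomputable def thinnedTruncNegBinomial (r ξ p : ℝ) (m k : ℕ) : ℝ :=
  ((m + k).choose m : ℝ) * p ^ m * (1 - p) ^ k * truncNegBinomial r ξ (m + k)

/-- The paper's `ξ_p`. -/
noncomputable def sampledRate (p ξ : ℝ) : ℝ :=
  p * ξ / (1 - ξ * (1 - p))

variable {r ξ p : ℝ}

lemma truncNegBinomial_nonneg (hr : 0 < r) (hξ : ξ ∈ Set.Icc (0 : ℝ) 1) (n : ℕ) :
    0 ≤ truncNegBinomial r ξ n := by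
  obtain ⟨hξ0, hξ1⟩ := hξ
  have : (1 - ξ) ^ r ≤ 1 := Real.rpow_le_one (by linarith) (by linarith) hr.le
  have := nbCoef_pos hr n
  unfold truncNegBinomial
  split_ifs
  · have : 0 ≤ (1 - (1 - ξ) ^ r)⁻¹ := inv_nonneg.2 (by linarith)
    have : 0 ≤ (1 - ξ) ^ r := Real.rpow_nonneg (by linarith) r
    positivity
  · exact le_rfl

lemma thinnedTruncNegBinomial_nonneg (hr : 0 < r) (hξ : ξ ∈ Set.Icc (0 : ℝ) 1)
    (hp : p ∈ Set.Icc (0 : ℝ) 1) (m k : ℕ) : 0 ≤ thinnedTruncNegBinomial r ξ p m k := by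
  have := truncNegBinomial_nonneg hr hξ (m + k)
  have : 0 ≤ 1 - p := by linarith [hp.2]
  have := hp.1
  unfold thinnedTruncNegBinomial
  positivity

lemma hasSum_truncNegBinomial (hr : 0 < r) (hξ : ξ ∈ Set.Ioo (0 : ℝ) 1) :
    HasSum (truncNegBinomial r ξ) 1 := by
  obtain ⟨hξ0, hξ1⟩ := hξ
  have hpow : (1 - ξ) ^ r < 1 := Real.rpow_lt_one (by linarith) (by linarith) hr
  have hsum := ((hasSum_nbCoef_mul_pow hr (abs_lt.2 ⟨by linarith, hξ1⟩)).mul_left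
    ((1 - (1 - ξ) ^ r)⁻¹ * (1 - ξ) ^ r)).update 0 0
  have hterm : Function.update (fun n ↦ (1 - (1 - ξ) ^ r)⁻¹ * (1 - ξ) ^ r * (nbCoef r n * ξ ^ n))
      0 0 = truncNegBinomial r ξ := by
    funext n
    rcases Nat.eq_zero_or_pos n with rfl | hn
    · simp [truncNegBinomial]
    · simp only [truncNegBinomial, Function.update_of_ne hn.ne', if_pos (show 1 ≤ n from hn)]
      ring
  rw [hterm] at hsum
  suffices hval : 0 - (1 - (1 - ξ) ^ r)⁻¹ * (1 - ξ) ^ r * (nbCoef r 0 * ξ ^ 0) +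
      (1 - (1 - ξ) ^ r)⁻¹ * (1 - ξ) ^ r * (1 - ξ) ^ (-r) = 1 by
    rwa [hval] at hsum
  rw [nbCoef_zero hr, Real.rpow_neg (by linarith)]
  have : (1 - ξ) ^ r ≠ 0 := (Real.rpow_pos_of_pos (by linarith) r).ne'
  have : 1 - (1 - ξ) ^ r ≠ 0 := by linarith
  field_simp
  ring

lemma one_sub_sampledRate (hq : 1 - ξ * (1 - p) ≠ 0) :
    1 - sampledRate p ξ = (1 - ξ) / (1 - ξ * (1 - p)) := by
  rw [sampledRate]
  field_simp
  ring

lemma hasSum_thinnedTruncNegBinomial_sampled (hr : 0 < r) (hξ : ξ ∈ Set.Ioo (0 : ℝ) 1)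
    (hp : p ∈ Set.Ioo (0 : ℝ) 1) {l : ℕ} (hl : 1 ≤ l) :
    HasSum (thinnedTruncNegBinomial r ξ p l)
      ((1 - (1 - ξ) ^ r)⁻¹ * (nbCoef r l * sampledRate p ξ ^ l * (1 - sampledRate p ξ) ^ r)) := by
  obtain ⟨hξ0, hξ1⟩ := hξ
  obtain ⟨hp0, hp1⟩ := hp
  have hq : 0 < 1 - ξ * (1 - p) := by nlinarith
  have hsum := (hasSum_nbCoef_mul_pow (show 0 < r + l by positivity)
    (x := ξ * (1 - p)) (abs_lt.2 ⟨by nlinarith, by nlinarith⟩)).mul_left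
    ((1 - (1 - ξ) ^ r)⁻¹ * (1 - ξ) ^ r * nbCoef r l * (p * ξ) ^ l)
  have hterm : ∀ k : ℕ, (1 - (1 - ξ) ^ r)⁻¹ * (1 - ξ) ^ r * nbCoef r l * (p * ξ) ^ l *
      (nbCoef (r + l) k * (ξ * (1 - p)) ^ k) = thinnedTruncNegBinomial r ξ p l k := by
    intro k
    simp only [thinnedTruncNegBinomial, truncNegBinomial, if_pos (hl.trans (Nat.le_add_right l k)),
      mul_pow ξ (1 - p)]
    linear_combination (-((1 - (1 - ξ) ^ r)⁻¹ * (1 - ξ) ^ r * p ^ l * (1 - p) ^ k * ξ ^ (l + k))) *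
      nbCoef_add_mul_choose hr l k
  simp only [hterm] at hsum
  suffices hval : (1 - (1 - ξ) ^ r)⁻¹ * (1 - ξ) ^ r * nbCoef r l * (p * ξ) ^ l *
      (1 - ξ * (1 - p)) ^ (-(r + l)) =
      (1 - (1 - ξ) ^ r)⁻¹ * (nbCoef r l * sampledRate p ξ ^ l * (1 - sampledRate p ξ) ^ r) by
    rwa [hval] at hsum
  rw [one_sub_sampledRate hq.ne', sampledRate, Real.div_rpow (by linarith) hq.le, div_pow,
    neg_add, Real.rpow_add hq, Real.rpow_neg hq.le, Real.rpow_neg hq.le, Real.rpow_natCast]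
  have := (Real.rpow_pos_of_pos hq r).ne'
  field_simp

lemma thinnedTruncNegBinomial_eq_mul_div (hr : 0 < r) (hξ : ξ ∈ Set.Ioo (0 : ℝ) 1)
    (hp : p ∈ Set.Ioo (0 : ℝ) 1) {l : ℕ} (hl : 1 ≤ l) (k : ℕ) :
    thinnedTruncNegBinomial r ξ p l k =
      (1 - (1 - ξ) ^ r)⁻¹ * (nbCoef r l * sampledRate p ξ ^ l * (1 - sampledRate p ξ) ^ r) *
        ((((k + l).choose l : ℝ) * p ^ l * (1 - p) ^ k * nbCoef r (k + l) * ξ ^ (k + l)) /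
          (nbCoef r l * sampledRate p ξ ^ l * (1 - sampledRate p ξ) ^ r * (1 - ξ) ^ (-r))) := by
  obtain ⟨hξ0, hξ1⟩ := hξ
  obtain ⟨hp0, hp1⟩ := hp
  have hq : 0 < 1 - ξ * (1 - p) := by nlinarith
  have : 0 < sampledRate p ξ := by unfold sampledRate; positivity
  have : 0 < (1 - sampledRate p ξ) ^ r := by
    rw [one_sub_sampledRate hq.ne']
    exact Real.rpow_pos_of_pos (div_pos (by linarith) hq) r
  have := nbCoef_pos hr l
  have := Real.rpow_pos_of_pos (sub_pos.2 hξ1) r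
  rw [Real.rpow_neg (by linarith)]
  simp only [thinnedTruncNegBinomial, truncNegBinomial, add_comm l k,
    if_pos (hl.trans (Nat.le_add_left l k))]
  field_simp

open Finset in
lemma tsum_ofReal_thinnedTruncNegBinomial (hr : 0 < r) (hξ : ξ ∈ Set.Ioo (0 : ℝ) 1)
    (hp : p ∈ Set.Icc (0 : ℝ) 1) :
    ∑' mk : ℕ × ℕ, ENNReal.ofReal (thinnedTruncNegBinomial r ξ p mk.1 mk.2) = 1 := by
  have hnn := thinnedTruncNegBinomial_nonneg hr (Set.Ioo_subset_Icc_self hξ) hp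
  have hantidiagonal : ∀ n : ℕ, ∑ mk ∈ antidiagonal n, thinnedTruncNegBinomial r ξ p mk.1 mk.2 =
      truncNegBinomial r ξ n := by
    intro n
    have hbinom := (Commute.all p (1 - p)).add_pow' n
    rw [add_sub_cancel, one_pow] at hbinom
    rw [← one_mul (truncNegBinomial r ξ n), hbinom, sum_mul]
    refine sum_congr rfl fun mk hmk ↦ ?_
    rw [HasAntidiagonal.mem_antidiagonal] at hmk
    simp [thinnedTruncNegBinomial, hmk, nsmul_eq_mul, mul_assoc]
  rw [← HasAntidiagonal.sigmaAntidiagonalEquivProd.tsum_eq, ENNReal.tsum_sigma']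
  simp only [HasAntidiagonal.sigmaAntidiagonalEquivProd_apply, Finset.tsum_subtype
    (f := fun mk : ℕ × ℕ ↦ ENNReal.ofReal (thinnedTruncNegBinomial r ξ p mk.1 mk.2)),
    ← ENNReal.ofReal_sum_of_nonneg (fun (mk : ℕ × ℕ) _ ↦ hnn mk.1 mk.2), hantidiagonal]
  rw [← ENNReal.ofReal_tsum_of_nonneg (truncNegBinomial_nonneg hr (Set.Ioo_subset_Icc_self hξ))
    (hasSum_truncNegBinomial hr hξ).summable, (hasSum_truncNegBinomial hr hξ).tsum_eq,
    ENNReal.ofReal_one]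

end Model

lemma Set.setOf_eq_eq_iUnion_setOf_and {Ω α β : Type*} {Y : Ω → α} (Z : Ω → β) (a : α) :
    {ω | Y ω = a} = ⋃ b, {ω | Y ω = a ∧ Z ω = b} := by
  ext ω
  simp

section NullMeasurable

open Set

variable {Ω : Type*} [MeasurableSpace Ω] {μ : Measure Ω}

lemma nullMeasurableSet_of_measure_add_measure_compl_le [IsFiniteMeasure μ] {s : Set Ω}
    (h : μ s + μ sᶜ ≤ μ univ) : NullMeasurableSet s μ := by
  set t := toMeasurable μ s
  set u := toMeasurable μ sᶜ
  have htu : t ∪ u = univ :=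
    eq_univ_of_forall fun ω ↦ (em (ω ∈ s)).imp (subset_toMeasurable μ s ·)
      (subset_toMeasurable μ sᶜ ·)
  have hinter : μ (t ∩ u) = 0 := by
    have := measure_union_add_inter (μ := μ) t (measurableSet_toMeasurable μ sᶜ)
    rw [htu, measure_toMeasurable, measure_toMeasurable] at this
    exact nonpos_iff_eq_zero.1 <| ENNReal.le_of_add_le_add_left (measure_ne_top μ univ)
      (by rw [this, add_zero]; exact h)
  refine (measurableSet_toMeasurable μ s).nullMeasurableSet.congr (ae_eq_set.2 ⟨?_, ?_⟩)
  · exact measure_mono_null (inter_subset_inter_right t (subset_toMeasurable μ sᶜ)) hinter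
  · simp [sdiff_eq_empty.2 (subset_toMeasurable μ s)]

lemma nullMeasurableSet_of_tsum_measure_le [IsFiniteMeasure μ] {ι : Type*} [Countable ι]
    {A : ι → Set Ω} (hcover : ∀ ω, ∃ i, ω ∈ A i) (hsum : ∑' i, μ (A i) ≤ μ univ) (i : ι) :
    NullMeasurableSet (A i) μ := by
  classical
  refine nullMeasurableSet_of_measure_add_measure_compl_le (le_trans ?_ hsum)
  rw [ENNReal.tsum_eq_add_tsum_ite i]
  gcongr
  calc μ (A i)ᶜ ≤ μ (⋃ j, if j = i then ∅ else A j) := by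
        refine measure_mono fun ω hω ↦ ?_
        obtain ⟨j, hj⟩ := hcover ω
        refine mem_iUnion.2 ⟨j, ?_⟩
        rwa [if_neg (by rintro rfl; exact hω hj)]
    _ ≤ ∑' j, μ (if j = i then ∅ else A j) := measure_iUnion_le _
    _ = ∑' j, if j = i then 0 else μ (A j) := by
        congr! 2 with j; split_ifs <;> simp

lemma integral_card_filter [IsFiniteMeasure μ] {ι : Type*} [Fintype ι] {P : ι → Ω → Prop}
    [∀ i ω, Decidable (P i ω)] (hP : ∀ i, NullMeasurableSet {ω | P i ω} μ) :
    ∫ ω, ((Finset.univ.filter fun i ↦ P i ω).card : ℝ) ∂μ = ∑ i, μ.real {ω | P i ω} := by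
  have hind : ∀ ω, ((Finset.univ.filter fun i ↦ P i ω).card : ℝ) =
      ∑ i, {ω | P i ω}.indicator 1 ω := by
    intro ω
    rw [Finset.card_filter, Nat.cast_sum]
    exact Finset.sum_congr rfl fun i _ ↦ by by_cases h : P i ω <;> simp [h]
  simp_rw [hind]
  rw [integral_finsetSum _ fun i _ ↦ (integrable_const 1).indicator₀ (hP i)]
  simp [integral_indicator₀ (hP _)]

variable {α β : Type*} {Y : Ω → α} {Z : Ω → β}

lemma nullMeasurableSet_setOf_and_of_tsum_le [IsFiniteMeasure μ] [Countable α] [Countable β]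
    (hsum : ∑' ab : α × β, μ {ω | Y ω = ab.1 ∧ Z ω = ab.2} ≤ μ univ) (a : α) (b : β) :
    NullMeasurableSet {ω | Y ω = a ∧ Z ω = b} μ :=
  nullMeasurableSet_of_tsum_measure_le (A := fun ab : α × β ↦ {ω | Y ω = ab.1 ∧ Z ω = ab.2})
    (fun ω ↦ ⟨(Y ω, Z ω), rfl, rfl⟩) hsum (a, b)

lemma nullMeasurableSet_setOf_eq_of_and [Countable β] {a : α}
    (h : ∀ b, NullMeasurableSet {ω | Y ω = a ∧ Z ω = b} μ) :
    NullMeasurableSet {ω | Y ω = a} μ :=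
  setOf_eq_eq_iUnion_setOf_and Z a ▸ .iUnion h

lemma measure_setOf_eq_eq_tsum [Countable β] {a : α}
    (h : ∀ b, NullMeasurableSet {ω | Y ω = a ∧ Z ω = b} μ) :
    μ {ω | Y ω = a} = ∑' b, μ {ω | Y ω = a ∧ Z ω = b} := by
  rw [setOf_eq_eq_iUnion_setOf_and Z]
  refine measure_iUnion₀ (fun b b' hbb' ↦ Disjoint.aedisjoint ?_) h
  exact disjoint_left.2 fun ω h h' ↦ hbb' (h.2.symm.trans h'.2)

end NullMeasurable

/-- Unbiasedness of the conditional estimator: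
E[S_{1-p}(k|l)] = E[S_p(l)] · [C(k+l,l) p^l (1-p)^k C(k+l+r-1,k+l) ξ^{k+l}] /
[C(l+r-1,l) ξ_p^l (1-ξ_p)^r (1-ξ)^{-r}], with ξ_p = pξ/(1-ξ(1-p)). -/
theorem stmt17 {Ω : Type*} [MeasurableSpace Ω] (μ : Measure Ω)
    [IsProbabilityMeasure μ] (r ξ p : ℝ) (hr : 0 < r)
    (hξ : ξ ∈ Set.Ioo (0:ℝ) 1) (hp : p ∈ Set.Ioo (0:ℝ) 1)
    (S : ℕ) (N Np : Fin S → Ω → ℕ) (hle : ∀ s ω, Np s ω ≤ N s ω)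
    (hjoint : ∀ s, ∀ n k : ℕ, k ≤ n →
      μ {ω | N s ω = n ∧ Np s ω = k} =
        ENNReal.ofReal ((n.choose k : ℝ) * p ^ k * (1 - p) ^ (n - k) *
          (if 1 ≤ n then (1 - (1 - ξ) ^ r)⁻¹ * nbCoef r n * ξ ^ n * (1 - ξ) ^ r
           else 0)))
    (l k : ℕ) (hl : 1 ≤ l) :
    ∫ ω, ((Finset.univ.filter
        fun s : Fin S => Np s ω = l ∧ N s ω - Np s ω = k).card : ℝ) ∂μ =
      (∫ ω, ((Finset.univ.filter fun s : Fin S => Np s ω = l).card : ℝ) ∂μ) *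
        ((((k + l).choose l : ℝ) * p ^ l * (1 - p) ^ k *
          nbCoef r (k + l) * ξ ^ (k + l)) /
        (nbCoef r l * (p * ξ / (1 - ξ * (1 - p))) ^ l *
          (1 - p * ξ / (1 - ξ * (1 - p))) ^ r * (1 - ξ) ^ (-r))) := by
  have hlaw : ∀ s m k, μ {ω | Np s ω = m ∧ N s ω - Np s ω = k} =
      ENNReal.ofReal (thinnedTruncNegBinomial r ξ p m k) := by
    intro s m k
    have hfibre : {ω | Np s ω = m ∧ N s ω - Np s ω = k} = {ω | N s ω = m + k ∧ Np s ω = m} := by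
      ext ω
      have := hle s ω
      simp only [Set.mem_ofPred_eq]
      omega
    rw [hfibre, hjoint s _ _ (Nat.le_add_right m k), Nat.add_sub_cancel_left]
    rfl
  have hnn := thinnedTruncNegBinomial_nonneg hr (Set.Ioo_subset_Icc_self hξ)
    (Set.Ioo_subset_Icc_self hp)
  have hnull : ∀ s, ∀ m k, NullMeasurableSet {ω | Np s ω = m ∧ N s ω - Np s ω = k} μ :=
    fun s ↦ nullMeasurableSet_setOf_and_of_tsum_le <| by
      simp only [hlaw, tsum_ofReal_thinnedTruncNegBinomial hr hξ (Set.Ioo_subset_Icc_self hp),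
        measure_univ, le_refl]
  have hsampled := hasSum_thinnedTruncNegBinomial_sampled hr hξ hp hl
  rw [integral_card_filter fun s ↦ hnull s l k,
    integral_card_filter fun s ↦ nullMeasurableSet_setOf_eq_of_and (hnull s l)]
  simp only [measureReal_def, measure_setOf_eq_eq_tsum (hnull _ l), hlaw,
    ← ENNReal.ofReal_tsum_of_nonneg (hnn l) hsampled.summable, hsampled.tsum_eq,
    ENNReal.toReal_ofReal (hnn l k), ENNReal.toReal_ofReal (hsampled.nonneg (hnn l)),
    Finset.sum_const, Finset.card_univ, Fintype.card_fin, nsmul_eq_mul]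
  rw [mul_assoc]
  exact congrArg _ (thinnedTruncNegBinomial_eq_mul_div hr hξ hp hl k)
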